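/- Let M be a compact metric space with a finite good covering 𝒰 = {U_1,…,U_N}, and let q : D(𝒰) → M be the projection q(θ,x) = x. Then there exists a Lipschitz map τ : M → D(𝒰) such that q∘τ = 1_M and τ(M) is a Lipschitz strong deformation retract of D(𝒰). -/

import Mathlib

open Metric Set

/-- A subset `V` of a metric space admits a *Lipschitz strong deformation retraction to a
point*. -/
def IsLipSDRToPoint {X : Type*} [MetricSpace X] (V : Set X) : Prop :=
  ∃ (p : V) (F : V × unitInterval → V) (K : NNReal),
    LipschitzWith K F ∧ (∀ x, F (x, 0) = x) ∧ (∀ x, F (x, 1) = p) ∧ (∀ t, F (p, t) = p)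

/-- A subset `A` of a metric space `X` is a *Lipschitz strong deformation retract* of `X`. -/
def IsLipSDR {X : Type*} [MetricSpace X] (A : Set X) : Prop :=
  ∃ (F : X × unitInterval → X) (K : NNReal), LipschitzWith K F ∧
    (∀ x, F (x, 0) = x) ∧ (∀ x, F (x, 1) ∈ A) ∧ (∀ a ∈ A, ∀ t, F (a, t) = a)

/-- A locally finite open covering is *good*. -/
def IsGoodCovering {X : Type*} [MetricSpace X] {J : Type*} (U : J → Set X) : Prop :=
  (∀ j, IsOpen (U j)) ∧ (⋃ j, U j) = univ ∧ LocallyFinite U ∧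
    (∀ j, IsCompact (closure (U j))) ∧
    ∀ s : Finset J, s.Nonempty → (⋂ j ∈ s, U j).Nonempty → IsLipSDRToPoint (⋂ j ∈ s, U j)

/-- The geometric realization of the nerve of a finite covering, with the sup metric. -/
def NerveSet {M : Type*} [MetricSpace M] {N : ℕ} (U : Fin N → Set M) : Set (Fin N → ℝ) :=
  {θ | (∀ j, θ j ∈ Icc (0:ℝ) 1) ∧ ∑ j, θ j = 1 ∧ (⋂ j ∈ {j | θ j ≠ 0}, U j).Nonempty}

/-- `D(𝒰) = {(θ, x) ∈ |𝒩_𝒰| × M : x ∈ ⋂_{j ∈ supp θ} U_j}`, as a subset of the `ℓ²`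
product `|𝒩_𝒰| ×₂ M` (so that `d((θ,x),(θ',x'))² = d(θ,θ')² + d(x,x')²`). -/
def DSet {M : Type*} [MetricSpace M] {N : ℕ} (U : Fin N → Set M) :
    Set (WithLp 2 (↥(NerveSet U) × M)) :=
  {z | (WithLp.equiv 2 (↥(NerveSet U) × M) z).2 ∈
    ⋂ j ∈ {j | ((WithLp.equiv 2 (↥(NerveSet U) × M) z).1 : Fin N → ℝ) j ≠ 0}, U j}

/-!
Normalising the bumps `x ↦ d(x, M ∖ U_j)` by their sum, which compactness bounds away from zero,
gives a Lipschitz partition of unity `φ` subordinate to `𝒰`, and `τ x = (φ x, x)`. The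
straight-line homotopy `((θ, x), t) ↦ ((1 - t) θ + t φ(x), x)` stays in `D(𝒰)`: every index in
the support of the convex combination lies in `supp θ` or in `supp φ(x)`, and `x ∈ U_j` for both
kinds. It is Lipschitz because its endpoints are and the simplex has sup-diameter `1`; it starts
at the identity, ends in `τ(M)`, and fixes `τ(M)` since there `θ = φ(x)`.
-/

open scoped NNReal

section Lipschitz

variable {X : Type*} [PseudoMetricSpace X]

theorem IsOpen.exists_lipschitzWith_support_eq {U : Set X} (hU : IsOpen U) :
    ∃ f : X → ℝ, LipschitzWith 1 f ∧ 0 ≤ f ∧ Function.support f = U := by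
  -- `infDist x ∅ = 0`, so `U = univ` needs its own bump
  rcases Uᶜ.eq_empty_or_nonempty with hUc | hUc
  · refine ⟨fun _ => 1, (LipschitzWith.const 1).weaken zero_le_one, fun _ => zero_le_one, ?_⟩
    rw [Function.support_const one_ne_zero, ← compl_empty_iff.1 hUc]
  · refine ⟨(infDist · Uᶜ), lipschitz_infDist_pt _, fun _ => infDist_nonneg, ?_⟩
    ext x
    simp [Function.mem_support, ← hU.isClosed_compl.mem_iff_infDist_zero hUc]

theorem LipschitzWith.div_of_abs_le {f g : X → ℝ} {Kf Kg ε : ℝ≥0} (hε : 0 < ε)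
    (hf : LipschitzWith Kf f) (hg : LipschitzWith Kg g) (hfg : ∀ x, |f x| ≤ g x)
    (hgε : ∀ x, ε ≤ g x) : LipschitzWith ((Kf + Kg) / ε) fun x => f x / g x := by
  refine LipschitzWith.of_dist_le_mul fun x y => ?_
  have hgx : 0 < g x := (NNReal.coe_pos.2 hε).trans_le (hgε x)
  have hgy : 0 < g y := (NNReal.coe_pos.2 hε).trans_le (hgε y)
  have hq : |f y / g y| ≤ 1 := by
    rw [abs_div, abs_of_pos hgy]; exact div_le_one_of_le₀ (hfg y) hgy.le
  have hf' : |f x - f y| ≤ Kf * dist x y := by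
    rw [← Real.dist_eq]; exact hf.dist_le_mul x y
  have hg' : |g y - g x| ≤ Kg * dist x y := by
    rw [← Real.dist_eq, dist_comm x y]; exact hg.dist_le_mul y x
  have hsplit : f x / g x - f y / g y = ((f x - f y) + f y / g y * (g y - g x)) / g x := by
    field_simp; ring
  rw [Real.dist_eq, hsplit, abs_div, abs_of_pos hgx, div_le_iff₀ hgx]
  calc |f x - f y + f y / g y * (g y - g x)|
      ≤ |f x - f y| + |f y / g y| * |g y - g x| := (abs_add_le _ _).trans (by rw [abs_mul])
    _ ≤ Kf * dist x y + 1 * (Kg * dist x y) := by gcongr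
    _ = (Kf + Kg) / ε * dist x y * ε := by field_simp
    _ ≤ (Kf + Kg) / ε * dist x y * g x := by gcongr; exact hgε x

theorem LipschitzWith.lineMap {E : Type*} [SeminormedAddCommGroup E] [NormedSpace ℝ E]
    {f g : X → E} {Kf Kg C : ℝ≥0} (hf : LipschitzWith Kf f) (hg : LipschitzWith Kg g)
    (hfg : ∀ x, nndist (f x) (g x) ≤ C) :
    LipschitzWith (Kf + Kg + C) fun p : X × unitInterval =>
      AffineMap.lineMap (f p.1) (g p.1) (p.2 : ℝ) := by
  refine LipschitzWith.uncurry
    (f := fun x (t : unitInterval) => AffineMap.lineMap (f x) (g x) (t : ℝ)) (fun t => ?_) ?_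
  · simp only [AffineMap.lineMap_apply_module]
    refine (((lipschitzWith_smul (1 - (t : ℝ))).comp hf).add
      ((lipschitzWith_smul (t : ℝ)).comp hg)).weaken ?_
    have h1 : ‖1 - (t : ℝ)‖₊ ≤ 1 := by
      rw [← NNReal.coe_le_coe, coe_nnnorm, Real.norm_eq_abs, abs_of_nonneg (by unit_interval)]
      simpa using t.2.1
    have h2 : ‖(t : ℝ)‖₊ ≤ 1 := by
      rw [← NNReal.coe_le_coe, coe_nnnorm, Real.norm_eq_abs, abs_of_nonneg t.2.1]
      exact t.2.2
    calc ‖1 - (t : ℝ)‖₊ * Kf + ‖(t : ℝ)‖₊ * Kg ≤ 1 * Kf + 1 * Kg := by gcongr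
      _ = Kf + Kg := by simp
  · intro x
    exact ((lipschitzWith_lineMap (f x) (g x)).comp (LipschitzWith.subtype_val _)).weaken
      (by simpa using hfg x)

theorem exists_lipschitzWith_partitionOfUnity [CompactSpace X] {ι : Type*} [Fintype ι]
    {U : ι → Set X} (hU : ∀ i, IsOpen (U i)) (hcov : ⋃ i, U i = univ) :
    ∃ (φ : X → ι → ℝ) (K : ℝ≥0), LipschitzWith K φ ∧ (∀ x, φ x ∈ stdSimplex ℝ ι) ∧
      ∀ x i, φ x i ≠ 0 → x ∈ U i := by
  choose b hb_lip hb_nonneg hb_supp using fun i => (hU i).exists_lipschitzWith_support_eq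
  set s : X → ℝ := fun x => ∑ i, b i x
  have hb_le : ∀ i x, |b i x| ≤ s x := fun i x => by
    rw [abs_of_nonneg (hb_nonneg i x)]
    exact Finset.single_le_sum (fun j _ => hb_nonneg j x) (Finset.mem_univ i)
  have hs_lip : LipschitzWith (Fintype.card ι) s := LipschitzWith.of_dist_le_mul fun x y => by
    refine (dist_sum_sum_le_of_le _ fun i _ => (hb_lip i).dist_le_mul x y).trans ?_
    simp
  have hs_pos : ∀ x, 0 < s x := fun x => by
    obtain ⟨i, hi⟩ := mem_iUnion.1 (hcov ▸ mem_univ x)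
    rw [← hb_supp i, Function.mem_support] at hi
    exact (abs_pos.2 hi).trans_le (hb_le i x)
  obtain ⟨ε, hε, hεs⟩ := isCompact_univ.exists_forall_le' hs_lip.continuous.continuousOn
    fun x _ => hs_pos x
  lift ε to ℝ≥0 using hε.le
  refine ⟨fun x i => b i x / s x, (1 + Fintype.card ι) / ε, ?_, fun x => ⟨?_, ?_⟩, ?_⟩
  · refine LipschitzWith.of_dist_le_mul fun x y => (dist_pi_le_iff (by positivity)).2 fun i => ?_
    have hεs' : ∀ x, ε ≤ s x := fun x => hεs x (mem_univ x)
    exact ((hb_lip i).div_of_abs_le hε hs_lip (hb_le i) hεs').dist_le_mul x y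
  · exact fun i => div_nonneg (hb_nonneg i x) (hs_pos x).le
  · rw [← Finset.sum_div, div_self (hs_pos x).ne']
  · intro x i h
    rw [← hb_supp i]
    exact (div_ne_zero_iff.1 h).1

end Lipschitz

theorem dist_le_one_of_mem_stdSimplex {ι : Type*} [Fintype ι] {f g : ι → ℝ}
    (hf : f ∈ stdSimplex ℝ ι) (hg : g ∈ stdSimplex ℝ ι) : dist f g ≤ 1 := by
  refine (dist_pi_le_iff zero_le_one).2 fun i => ?_
  obtain ⟨hf0, hf1⟩ := mem_Icc_of_mem_stdSimplex hf i
  obtain ⟨hg0, hg1⟩ := mem_Icc_of_mem_stdSimplex hg i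
  rw [Real.dist_eq, abs_le]
  constructor <;> linarith

theorem lineMap_apply_ne_zero {ι : Type*} {f g : ι → ℝ} {t : ℝ} {i : ι}
    (h : AffineMap.lineMap f g t i ≠ 0) : f i ≠ 0 ∨ g i ≠ 0 := by
  contrapose! h
  simp [AffineMap.lineMap_apply_module, h.1, h.2]

namespace DSet

variable {M : Type*} [MetricSpace M] {N : ℕ} {U : Fin N → Set M}

def weights (z : DSet U) : Fin N → ℝ := (WithLp.equiv 2 (↥(NerveSet U) × M) z.1).1

def point (z : DSet U) : M := (WithLp.equiv 2 (↥(NerveSet U) × M) z.1).2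

theorem weights_mem_stdSimplex (z : DSet U) : weights z ∈ stdSimplex ℝ (Fin N) :=
  ⟨fun j => ((WithLp.equiv 2 _ z.1).1.2.1 j).1, (WithLp.equiv 2 _ z.1).1.2.2.1⟩

theorem point_mem (z : DSet U) {j : Fin N} (h : weights z j ≠ 0) : point z ∈ U j :=
  mem_iInter₂.1 z.2 j h

theorem lipschitzWith_weights : LipschitzWith 1 (weights : DSet U → Fin N → ℝ) :=
  ((LipschitzWith.subtype_val _).comp (LipschitzWith.prod_fst.comp
    ((WithLp.prod_lipschitzWith_ofLp 2 _ _).comp (LipschitzWith.subtype_val _)))).weaken (by simp)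

theorem lipschitzWith_point : LipschitzWith 1 (point : DSet U → M) :=
  (LipschitzWith.prod_snd.comp
    ((WithLp.prod_lipschitzWith_ofLp 2 _ _).comp (LipschitzWith.subtype_val _))).weaken (by simp)

def mk (θ : Fin N → ℝ) (x : M) (hθ : θ ∈ stdSimplex ℝ (Fin N))
    (hx : ∀ j, θ j ≠ 0 → x ∈ U j) : DSet U :=
  ⟨WithLp.toLp 2 (⟨θ, mem_Icc_of_mem_stdSimplex hθ, hθ.2, x, mem_iInter₂.2 hx⟩, x),
    mem_iInter₂.2 hx⟩

@[simp]
theorem weights_mk {θ : Fin N → ℝ} {x : M} (hθ hx) : weights (mk θ x hθ hx : DSet U) = θ := rfl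

@[simp]
theorem point_mk {θ : Fin N → ℝ} {x : M} (hθ hx) : point (mk θ x hθ hx : DSet U) = x := rfl

theorem exists_lipschitzWith_mk {X : Type*} [PseudoMetricSpace X] {θ : X → Fin N → ℝ}
    {x : X → M} {Kθ Kx : ℝ≥0} (hθ : LipschitzWith Kθ θ) (hx : LipschitzWith Kx x)
    (hθs : ∀ p, θ p ∈ stdSimplex ℝ (Fin N)) (hxU : ∀ p j, θ p j ≠ 0 → x p ∈ U j) :
    ∃ K, LipschitzWith K fun p => mk (θ p) (x p) (hθs p) (hxU p) :=
  ⟨_, ((WithLp.prod_lipschitzWith_toLp 2 _ _).comp ((hθ.subtype_mk _).prodMk hx)).subtype_mk _⟩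

theorem ext {z w : DSet U} (hθ : weights z = weights w) (hx : point z = point w) : z = w :=
  Subtype.ext <| (WithLp.equiv 2 _).injective <| Prod.ext (Subtype.ext hθ) hx

section Homotopy

variable (φ : M → Fin N → ℝ) (hφ : ∀ x, φ x ∈ stdSimplex ℝ (Fin N))
  (hφU : ∀ x j, φ x j ≠ 0 → x ∈ U j)

def straightLineHomotopy (p : DSet U × unitInterval) : DSet U :=
  mk (AffineMap.lineMap (weights p.1) (φ (point p.1)) (p.2 : ℝ)) (point p.1)
    ((convex_stdSimplex ℝ _).lineMap_mem (weights_mem_stdSimplex _) (hφ _) p.2.2)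
    fun _ hj => (lineMap_apply_ne_zero hj).elim (point_mem p.1) (hφU _ _)

theorem straightLineHomotopy_zero (z : DSet U) : straightLineHomotopy φ hφ hφU (z, 0) = z :=
  ext (by simp [straightLineHomotopy]) rfl

theorem straightLineHomotopy_one (z : DSet U) :
    straightLineHomotopy φ hφ hφU (z, 1) = mk (φ (point z)) (point z) (hφ _) (hφU _) :=
  ext (by simp [straightLineHomotopy]) rfl

theorem straightLineHomotopy_mk (x : M) (t : unitInterval) :
    straightLineHomotopy φ hφ hφU (mk (φ x) x (hφ x) (hφU x), t) = mk (φ x) x (hφ x) (hφU x) :=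
  ext (by simp [straightLineHomotopy]) rfl

theorem exists_lipschitzWith_straightLineHomotopy {K : ℝ≥0} (hφL : LipschitzWith K φ) :
    ∃ K', LipschitzWith K' (straightLineHomotopy φ hφ hφU) :=
  exists_lipschitzWith_mk
    (lipschitzWith_weights.lineMap (hφL.comp lipschitzWith_point) (C := 1) fun z => by
      rw [← NNReal.coe_le_coe, coe_nndist]
      exact dist_le_one_of_mem_stdSimplex (weights_mem_stdSimplex z) (hφ _))
    (lipschitzWith_point.comp LipschitzWith.prod_fst) _ _

end Homotopy

end DSet

/-- For a compact metric space `M` with a finite good covering `𝒰`, and the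
projection `q : D(𝒰) → M`, `q(θ,x) = x`, there exists a Lipschitz map `τ : M → D(𝒰)` which
is a section of `q` and whose image is a Lipschitz strong deformation retract of `D(𝒰)`. -/
theorem exists_section_lipSDR {M : Type*} [MetricSpace M] [CompactSpace M]
    {N : ℕ} (U : Fin N → Set M) (hU : IsGoodCovering U) :
    ∃ (τ : M → ↥(DSet U)) (K : NNReal), LipschitzWith K τ ∧
      (∀ x, (WithLp.equiv 2 (↥(NerveSet U) × M) (τ x).val).2 = x) ∧
      IsLipSDR (Set.range τ) := by
  obtain ⟨hO, hcov, -, -, -⟩ := hU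
  obtain ⟨φ, K, hφL, hφ, hφU⟩ := exists_lipschitzWith_partitionOfUnity hO hcov
  obtain ⟨Kτ, hτ⟩ := DSet.exists_lipschitzWith_mk hφL LipschitzWith.id hφ hφU
  obtain ⟨KH, hH⟩ := DSet.exists_lipschitzWith_straightLineHomotopy φ hφ hφU hφL
  refine ⟨fun x => DSet.mk (φ x) x (hφ x) (hφU x), Kτ, hτ, fun _ => rfl, DSet.straightLineHomotopy φ hφ hφU, KH, hH,
    DSet.straightLineHomotopy_zero φ hφ hφU,
    fun z => ⟨DSet.point z, (DSet.straightLineHomotopy_one φ hφ hφU z).symm⟩, ?_⟩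
  rintro _ ⟨x, rfl⟩ t
  exact DSet.straightLineHomotopy_mk φ hφ hφU x t
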